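/- For every proof p of a sequent Δ ⊢ Γ in INC there is a proof of the sequent !T_!(Δ) ⊢ T_!(Γ) in ILC_ι, where the translation T_! on formulas is given by T_!(⊤) = ⊤, T_!(ff) = !⊥, T_!(A & B) = T_!(A) & T_!(B), T_!(A ∨ B) = !T_!(A) ⊕ !T_!(B), T_!(A ⇒ B) = !T_!(A) ⊸ T_!(B) (with A ⊸ B := ¬A ⅋ B), T_!(?A) = ?T_!(A), and T_!(X) = X; !T_!(Δ) prefixes each formula of the translated left context with !. -/
import Mathlib


set_option autoImplicit true

/-- Formulas of intuitionistic logic extended (IL^e). -/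
inductive GF : Type
  | var : ℕ → GF
  | top : GF
  | ff : GF
  | withc : GF → GF → GF
  | or : GF → GF → GF
  | imp : GF → GF → GF
  | wn : GF → GF

/-- `INC c Δ Γ` : the sequent `Δ ⊢ Γ` is provable in the sequent calculus INC
for IL^e; the flag `c` permits the cut rule Cut^?. -/
inductive INC : Bool → List GF → List GF → Prop
  | xl : INC c (Δ ++ A :: A' :: Δ') Γ → INC c (Δ ++ A' :: A :: Δ') Γ
  | xr : INC c Δ (Γ ++ B :: B' :: Γ') → INC c Δ (Γ ++ B' :: B :: Γ')
  | wl : INC c Δ Γ → INC c (Δ ++ [A]) Γ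
  | wnW : INC c Δ Γ → INC c Δ (GF.wn B :: Γ)
  | cl : INC c (Δ ++ [A, A]) Γ → INC c (Δ ++ [A]) Γ
  | wnC : INC c Δ (GF.wn B :: GF.wn B :: Γ) → INC c Δ (GF.wn B :: Γ)
  | wnD : INC c Δ (B :: Γ) → INC c Δ (GF.wn B :: Γ)
  | wnL : INC c (Δ ++ [A]) (List.map GF.wn Γ) → INC c (Δ ++ [GF.wn A]) (List.map GF.wn Γ)
  | id : INC c [A] [A]
  | cut : INC true Δ (GF.wn B :: List.map GF.wn Γ) → INC true (Δ' ++ [B]) (List.map GF.wn Γ') →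
      INC true (Δ ++ Δ') (List.map GF.wn Γ ++ List.map GF.wn Γ')
  | topL : INC c Δ Γ → INC c (Δ ++ [GF.top]) Γ
  | topR : INC c [] [GF.top]
  | ffL : INC c [GF.ff] []
  | ffR : INC c Δ (List.map GF.wn Γ) → INC c Δ (GF.ff :: List.map GF.wn Γ)
  | withL₁ : INC c (Δ ++ [A₁]) Γ → INC c (Δ ++ [GF.withc A₁ A₂]) Γ
  | withL₂ : INC c (Δ ++ [A₂]) Γ → INC c (Δ ++ [GF.withc A₁ A₂]) Γ
  | withR : INC c Δ (B₁ :: List.map GF.wn Γ) → INC c Δ (B₂ :: List.map GF.wn Γ) →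
      INC c Δ (GF.withc B₁ B₂ :: List.map GF.wn Γ)
  | orL : INC c (Δ ++ [A₁]) Γ → INC c (Δ ++ [A₂]) Γ → INC c (Δ ++ [GF.or A₁ A₂]) Γ
  | orR₁ : INC c Δ (B₁ :: List.map GF.wn Γ) → INC c Δ (GF.or B₁ B₂ :: List.map GF.wn Γ)
  | orR₂ : INC c Δ (B₂ :: List.map GF.wn Γ) → INC c Δ (GF.or B₁ B₂ :: List.map GF.wn Γ)
  | impL : INC c (Δ ++ [B]) Γ → INC c Θ (A :: List.map GF.wn Ξ) →
      INC c (Δ ++ Θ ++ [GF.imp A B]) (Γ ++ List.map GF.wn Ξ)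
  | impR : INC c (Δ ++ [A]) (B :: List.map GF.wn Γ) → INC c Δ (GF.imp A B :: List.map GF.wn Γ)
/-- Formulas of intuitionistic linear logic extended (ILL^e). -/
inductive LF : Type
  | var : ℕ → LF
  | top : LF
  | bot : LF
  | one : LF
  | zero : LF
  | tensor : LF → LF → LF
  | par : LF → LF → LF
  | withc : LF → LF → LF
  | plus : LF → LF → LF
  | neg : LF → LF
  | ofc : LF → LF
  | wn : LF → LF

/-- `ILC c w Δ Γ` : the sequent `Δ ⊢ Γ` is provable, where the flag `c`
permits the Cut rule and the flag `w` permits the two weakly distributive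
rules.  Thus `ILC true false` is provability in ILC and `ILC true true` is
provability in ILC_ι. -/
inductive ILC : Bool → Bool → List LF → List LF → Prop
  | xl : ILC c w (Δ ++ A :: A' :: Δ') Γ → ILC c w (Δ ++ A' :: A :: Δ') Γ
  | xr : ILC c w Δ (Γ ++ B :: B' :: Γ') → ILC c w Δ (Γ ++ B' :: B :: Γ')
  | ocW : ILC c w Δ Γ → ILC c w (Δ ++ [LF.ofc A]) Γ
  | wnW : ILC c w Δ Γ → ILC c w Δ (LF.wn B :: Γ)
  | ocC : ILC c w (Δ ++ [LF.ofc A, LF.ofc A]) Γ → ILC c w (Δ ++ [LF.ofc A]) Γ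
  | wnC : ILC c w Δ (LF.wn B :: LF.wn B :: Γ) → ILC c w Δ (LF.wn B :: Γ)
  | ocD : ILC c w (Δ ++ [A]) Γ → ILC c w (Δ ++ [LF.ofc A]) Γ
  | wnD : ILC c w Δ (B :: Γ) → ILC c w Δ (LF.wn B :: Γ)
  | wnL : ILC c w (List.map LF.ofc Δ ++ [A]) (List.map LF.wn Γ) →
      ILC c w (List.map LF.ofc Δ ++ [LF.wn A]) (List.map LF.wn Γ)
  | ocR : ILC c w (List.map LF.ofc Δ) (B :: List.map LF.wn Γ) →
      ILC c w (List.map LF.ofc Δ) (LF.ofc B :: List.map LF.wn Γ)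
  | id : ILC c w [A] [A]
  | cut : ILC true w Δ (B :: Γ) → ILC true w (Δ' ++ [B]) Γ' →
      ILC true w (Δ ++ Δ') (Γ ++ Γ')
  | oneR : ILC c w Δ (LF.one :: Γ)
  | zeroL : ILC c w (Δ ++ [LF.zero]) Γ
  | topL : ILC c w Δ Γ → ILC c w (Δ ++ [LF.top]) Γ
  | topR : ILC c w [] [LF.top]
  | botL : ILC c w [LF.bot] []
  | botR : ILC c w Δ Γ → ILC c w Δ (LF.bot :: Γ)
  | tensorL : ILC c w (Δ ++ [A₁, A₂]) Γ → ILC c w (Δ ++ [LF.tensor A₁ A₂]) Γ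
  | tensorR : ILC c w Δ₁ (B₁ :: Γ₁) → ILC c w Δ₂ (B₂ :: Γ₂) →
      ILC c w (Δ₁ ++ Δ₂) (LF.tensor B₁ B₂ :: (Γ₁ ++ Γ₂))
  | withL₁ : ILC c w (Δ ++ [A₁]) Γ → ILC c w (Δ ++ [LF.withc A₁ A₂]) Γ
  | withL₂ : ILC c w (Δ ++ [A₂]) Γ → ILC c w (Δ ++ [LF.withc A₁ A₂]) Γ
  | withR : ILC c w Δ (B₁ :: Γ) → ILC c w Δ (B₂ :: Γ) → ILC c w Δ (LF.withc B₁ B₂ :: Γ)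
  | parL : ILC c w (Δ₁ ++ [A₁]) Γ₁ → ILC c w (Δ₂ ++ [A₂]) Γ₂ →
      ILC c w (Δ₁ ++ Δ₂ ++ [LF.par A₁ A₂]) (Γ₁ ++ Γ₂)
  | parR : ILC c w Δ (B₁ :: B₂ :: Γ) → ILC c w Δ (LF.par B₁ B₂ :: Γ)
  | plusL : ILC c w (Δ ++ [A₁]) Γ → ILC c w (Δ ++ [A₂]) Γ → ILC c w (Δ ++ [LF.plus A₁ A₂]) Γ
  | plusR₁ : ILC c w Δ (B₁ :: Γ) → ILC c w Δ (LF.plus B₁ B₂ :: Γ)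
  | plusR₂ : ILC c w Δ (B₂ :: Γ) → ILC c w Δ (LF.plus B₁ B₂ :: Γ)
  | negL : ILC c w Δ (B :: Γ) → ILC c w (Δ ++ [LF.neg B]) Γ
  | negR : ILC c w (Δ ++ [A]) Γ → ILC c w Δ (LF.neg A :: Γ)
  | ocwnL : ILC c true (List.map LF.ofc Δ ++ [LF.ofc A]) (List.map LF.wn Γ) →
      ILC c true (List.map LF.ofc Δ ++ [LF.ofc (LF.wn A)]) (List.map LF.wn Γ)
  | wnocR : ILC c true (List.map LF.ofc Δ) (LF.wn B :: List.map LF.wn Γ) →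
      ILC c true (List.map LF.ofc Δ) (LF.wn (LF.ofc B) :: List.map LF.wn Γ)

/-- The translation T_! of IL^e-formulas into ILL^e-formulas, with
`A ⊸ B := ¬A ⅋ B`. -/
def Toc : GF → LF
  | GF.var n => LF.var n
  | GF.top => LF.top
  | GF.ff => LF.ofc LF.bot
  | GF.withc A B => LF.withc (Toc A) (Toc B)
  | GF.or A B => LF.plus (LF.ofc (Toc A)) (LF.ofc (Toc B))
  | GF.imp A B => LF.par (LF.neg (LF.ofc (Toc A))) (Toc B)
  | GF.wn A => LF.wn (Toc A)

private lemma ilc_perm_l_aux {c w : Bool} {Δ Δ' : List LF} (p : Δ.Perm Δ') :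
    ∀ Θ Γ, ILC c w (Θ ++ Δ) Γ → ILC c w (Θ ++ Δ') Γ := by
  induction p with
  | nil => exact fun Θ Γ h => h
  | cons x _ ih =>
      intro Θ Γ h
      have := ih (Θ ++ [x]) Γ (by simpa using h)
      simpa using this
  | swap x y l => intro Θ Γ h; exact ILC.xl h
  | trans _ _ ih1 ih2 => exact fun Θ Γ h => ih2 Θ Γ (ih1 Θ Γ h)

private lemma ilc_perm_l {c w : Bool} {Δ Δ' Γ : List LF} (p : Δ.Perm Δ')
    (h : ILC c w Δ Γ) : ILC c w Δ' Γ := by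
  simpa using ilc_perm_l_aux p [] Γ (by simpa using h)

private lemma ilc_perm_r_aux {c w : Bool} {Γ Γ' : List LF} (p : Γ.Perm Γ') :
    ∀ Θ Δ, ILC c w Δ (Θ ++ Γ) → ILC c w Δ (Θ ++ Γ') := by
  induction p with
  | nil => exact fun Θ Δ h => h
  | cons x _ ih =>
      intro Θ Δ h
      have := ih (Θ ++ [x]) Δ (by simpa using h)
      simpa using this
  | swap x y l => intro Θ Δ h; exact ILC.xr h
  | trans _ _ ih1 ih2 => exact fun Θ Δ h => ih2 Θ Δ (ih1 Θ Δ h)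

private lemma ilc_perm_r {c w : Bool} {Δ Γ Γ' : List LF} (p : Γ.Perm Γ')
    (h : ILC c w Δ Γ) : ILC c w Δ Γ' := by
  simpa using ilc_perm_r_aux p [] Δ (by simpa using h)

private lemma ilc_cut_head {w : Bool} {A B : LF} {Δ Γ : List LF}
    (h1 : ILC true w [A] [B]) (h2 : ILC true w (Δ ++ [B]) Γ) :
    ILC true w (Δ ++ [A]) Γ := by
  have h3 : ILC true w ([A] ++ Δ) ([] ++ Γ) := ILC.cut (Γ := []) h1 h2
  exact ilc_perm_l (List.perm_append_comm) (by simpa using h3)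

private lemma mapToc_wn (Γ : List GF) :
    (List.map GF.wn Γ).map Toc = (Γ.map Toc).map LF.wn := by
  induction Γ with
  | nil => rfl
  | cons a t ih => simp [Toc, ih]

private lemma map_F (Δ : List GF) :
    List.map (fun A => LF.ofc (Toc A)) Δ = List.map LF.ofc (Δ.map Toc) := by
  induction Δ with
  | nil => rfl
  | cons a t ih => simp [ih]

private lemma oc_with₁ (X Y : LF) : ILC true true [LF.ofc (LF.withc X Y)] [LF.ofc X] := by
  have b1 : ILC true true ([] ++ [LF.withc X Y]) [X] := ILC.withL₁ (Δ := []) ILC.id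
  have b2 : ILC true true ([] ++ [LF.ofc (LF.withc X Y)]) [X] := ILC.ocD b1
  have b3 : ILC true true (List.map LF.ofc [LF.withc X Y]) (X :: List.map LF.wn []) := by
    simpa using b2
  simpa using ILC.ocR b3

private lemma oc_with₂ (X Y : LF) : ILC true true [LF.ofc (LF.withc X Y)] [LF.ofc Y] := by
  have b1 : ILC true true ([] ++ [LF.withc X Y]) [Y] := ILC.withL₂ (Δ := []) ILC.id
  have b2 : ILC true true ([] ++ [LF.ofc (LF.withc X Y)]) [Y] := ILC.ocD b1
  have b3 : ILC true true (List.map LF.ofc [LF.withc X Y]) (Y :: List.map LF.wn []) := by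
    simpa using b2
  simpa using ILC.ocR b3

private lemma inc_to_ilc_iota_aux {c : Bool} {Δ Γ : List GF} (h : INC c Δ Γ) :
    ILC true true (Δ.map fun A => LF.ofc (Toc A)) (Γ.map Toc) := by
  induction h with
  | xl _ ih =>
      simp only [List.map_append, List.map_cons] at ih ⊢
      exact ILC.xl ih
  | xr _ ih =>
      simp only [List.map_append, List.map_cons] at ih ⊢
      exact ILC.xr ih
  | wl _ ih =>
      simp only [List.map_append, List.map_cons, List.map_nil] at ih ⊢
      exact ILC.ocW ih
  | wnW _ ih =>
      simp only [List.map_cons, Toc] at ih ⊢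
      exact ILC.wnW ih
  | cl _ ih =>
      simp only [List.map_append, List.map_cons, List.map_nil] at ih ⊢
      exact ILC.ocC ih
  | wnC _ ih =>
      simp only [List.map_cons, Toc] at ih ⊢
      exact ILC.wnC ih
  | wnD _ ih =>
      simp only [List.map_cons, Toc] at ih ⊢
      exact ILC.wnD ih
  | wnL _ ih =>
      simp only [List.map_append, List.map_cons, List.map_nil, map_F, mapToc_wn, Toc] at ih ⊢
      exact ILC.ocwnL ih
  | id =>
      simpa using ILC.ocD (Δ := []) (ILC.id)
  | cut _ _ ih1 ih2 =>
      simp only [List.map_append, List.map_cons, List.map_nil, map_F, mapToc_wn, Toc] at ih1 ih2 ⊢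
      have h1 := ILC.ocR ih1
      have h2 := ILC.ocwnL ih2
      exact ILC.cut h1 h2
  | topL _ ih =>
      simp only [List.map_append, List.map_cons, List.map_nil, Toc] at ih ⊢
      exact ILC.ocD (ILC.topL ih)
  | topR =>
      simpa [Toc] using ILC.topR (c := true) (w := true)
  | ffL =>
      have h0 : ILC true true ([] ++ [LF.bot]) [] := ILC.botL
      have h1 : ILC true true ([] ++ [LF.ofc LF.bot]) [] := ILC.ocD h0
      simpa [Toc] using ILC.ocD (Δ := []) (by simpa using h1)
  | ffR _ ih =>
      simp only [List.map_cons, map_F, mapToc_wn, Toc] at ih ⊢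
      exact ILC.ocR (ILC.botR ih)
  | withL₁ _ ih =>
      simp only [List.map_append, List.map_cons, List.map_nil, Toc] at ih ⊢
      exact ilc_cut_head (oc_with₁ _ _) ih
  | withL₂ _ ih =>
      simp only [List.map_append, List.map_cons, List.map_nil, Toc] at ih ⊢
      exact ilc_cut_head (oc_with₂ _ _) ih
  | withR _ _ ih1 ih2 =>
      simp only [List.map_cons, Toc, mapToc_wn] at ih1 ih2 ⊢
      exact ILC.withR ih1 ih2
  | orL _ _ ih1 ih2 =>
      simp only [List.map_append, List.map_cons, List.map_nil, Toc] at ih1 ih2 ⊢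
      exact ILC.ocD (ILC.plusL ih1 ih2)
  | orR₁ _ ih =>
      simp only [List.map_cons, Toc, map_F, mapToc_wn] at ih ⊢
      exact ILC.plusR₁ (ILC.ocR ih)
  | orR₂ _ ih =>
      simp only [List.map_cons, Toc, map_F, mapToc_wn] at ih ⊢
      exact ILC.plusR₂ (ILC.ocR ih)
  | impL _ _ ih1 ih2 =>
      rename_i Δ₀ B Γ₀ Θ A Ξ _ _
      simp only [List.map_append, List.map_cons, List.map_nil, Toc, map_F, mapToc_wn]
        at ih1 ih2 ⊢
      -- ih1 : ILC true true (map ofc TΔ₀ ++ [ofc TB]) (map Toc Γ₀)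
      -- ih2 : ILC true true (map ofc TΘ) (Toc A :: map wn TΞ)
      have hA : ILC true true (List.map LF.ofc (Θ.map Toc) ++ [LF.neg (LF.ofc (Toc A))])
          (List.map LF.wn (Ξ.map Toc)) := ILC.negL (ILC.ocR ih2)
      have hid : ILC true true ([] ++ [Toc B]) [Toc B] := by simpa using ILC.id (A := Toc B)
      have hpar := ILC.parL hA hid
      -- hpar : (map ofc TΘ ++ [] ++ [par ¬!TA TB]) ⊢ map wn TΞ ++ [TB]
      have hpar2 : ILC true true
          (List.map LF.ofc (Θ.map Toc) ++ [LF.par (LF.neg (LF.ofc (Toc A))) (Toc B)])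
          (Toc B :: List.map LF.wn (Ξ.map Toc)) := by
        refine ilc_perm_r
          (List.perm_append_comm (l₁ := List.map LF.wn (Ξ.map Toc)) (l₂ := [Toc B])) ?_
        simpa using hpar
      have hocd : ILC true true
          (List.map LF.ofc (Θ.map Toc) ++ [LF.ofc (LF.par (LF.neg (LF.ofc (Toc A))) (Toc B))])
          (Toc B :: List.map LF.wn (Ξ.map Toc)) := ILC.ocD hpar2
      have hocr : ILC true true
          (List.map LF.ofc (Θ.map Toc ++ [LF.par (LF.neg (LF.ofc (Toc A))) (Toc B)]))
          (LF.ofc (Toc B) :: List.map LF.wn (Ξ.map Toc)) := by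
        refine ILC.ocR ?_
        simpa using hocd
      have hcut := ILC.cut hocr ih1
      have h2 : ILC true true
          (List.map LF.ofc (Δ₀.map Toc) ++
            (List.map LF.ofc (Θ.map Toc) ++
              [LF.ofc (LF.par (LF.neg (LF.ofc (Toc A))) (Toc B))]))
          (List.map Toc Γ₀ ++ List.map LF.wn (Ξ.map Toc)) := by
        refine ilc_perm_r List.perm_append_comm (ilc_perm_l List.perm_append_comm ?_)
        simpa using hcut
      simpa [List.append_assoc] using h2
  | impR _ ih =>
      simp only [List.map_append, List.map_cons, List.map_nil, Toc, mapToc_wn] at ih ⊢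
      exact ILC.parR (ILC.negR ih)

/-- For every proof of `Δ ⊢ Γ` in INC there is a proof of
`!T_!(Δ) ⊢ T_!(Γ)` in ILC_ι. -/
theorem inc_to_ilc_iota (Δ Γ : List GF) :
    INC true Δ Γ →
    ILC true true (Δ.map fun A => LF.ofc (Toc A)) (Γ.map Toc) := by
  intro h
  exact inc_to_ilc_iota_aux h
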